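/- arXiv:2208.14936 — 3 statements merged into one kernel-verified Lean document; each statement's English description precedes it below -/
import Mathlib

section
/- Let C₁, C₂, D₁, D₂ be invertible k×k complex matrices satisfying D₁⁻¹C₂* = −C₁⁻¹D₂* and C₁C₂ = −D₂*D₁*. Then the matrix H = D₁⁻¹C₂* is Hermitian (H = H*). -/
open Matrix

theorem Matrix.conjTranspose_inv_mul_conjTranspose_of_mul_eq {n R : Type*} [Fintype n]
    [DecidableEq n] [CommRing R] [StarRing R] {C₁ C₂ D₁ E : Matrix n n R}
    (hC₁ : IsUnit C₁.det) (hD₁ : IsUnit D₁.det) (h : C₁ * C₂ = E * D₁ᴴ) :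
    (D₁⁻¹ * C₂ᴴ)ᴴ = C₁⁻¹ * E := by
  have hD₁H : IsUnit D₁ᴴ.det := by
    rw [det_conjTranspose]
    exact hD₁.star
  have hC₂ : C₂ = C₁⁻¹ * (E * D₁ᴴ) := by
    rw [← h, ← Matrix.mul_assoc, nonsing_inv_mul _ hC₁, Matrix.one_mul]
  calc (D₁⁻¹ * C₂ᴴ)ᴴ = C₂ * D₁ᴴ⁻¹ := by
        rw [conjTranspose_mul, conjTranspose_conjTranspose, conjTranspose_nonsing_inv]
    _ = C₁⁻¹ * E := by
        rw [hC₂, Matrix.mul_assoc, Matrix.mul_assoc, mul_nonsing_inv _ hD₁H, Matrix.mul_one]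

theorem factorisation_hermitian_step_general {k : ℕ}
    (C₁ C₂ D₁ D₂ : Matrix (Fin k) (Fin k) ℂ)
    (hC₁ : IsUnit C₁.det)
    (hD₁ : IsUnit D₁.det)
    (h1 : D₁⁻¹ * C₂ᴴ = -(C₁⁻¹ * D₂ᴴ))
    (h2 : C₁ * C₂ = -(D₂ᴴ * D₁ᴴ)) :
    (D₁⁻¹ * C₂ᴴ)ᴴ = D₁⁻¹ * C₂ᴴ := by
  rw [← neg_mul] at h2
  rw [conjTranspose_inv_mul_conjTranspose_of_mul_eq hC₁ hD₁ h2, h1, Matrix.mul_neg]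

theorem factorisation_hermitian_step {k : ℕ}
    (C₁ C₂ D₁ D₂ : Matrix (Fin k) (Fin k) ℂ)
    (hC₁ : IsUnit C₁.det) (hC₂ : IsUnit C₂.det)
    (hD₁ : IsUnit D₁.det) (hD₂ : IsUnit D₂.det)
    (h1 : D₁⁻¹ * C₂ᴴ = -(C₁⁻¹ * D₂ᴴ))
    (h2 : C₁ * C₂ = -(D₂ᴴ * D₁ᴴ)) :
    (D₁⁻¹ * C₂ᴴ)ᴴ = D₁⁻¹ * C₂ᴴ :=
  factorisation_hermitian_step_general C₁ C₂ D₁ D₂ hC₁ hD₁ h1 h2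
end

section
/- Let α, β ∈ ℂ and r ∈ ℝ, and consider the scalar quadratic polynomial p(ζ) = α + rζ − conj(α)ζ² (i.e., satisfying the reality condition with k = 1). If p is not identically zero, then there exist complex numbers A, B such that p(ζ) = (A − conj(B)ζ)(B + conj(A)ζ), i.e., AB = α, |A|² − |B|² = r, and conj(A)conj(B) = conj(α). -/
/-!
Take `A = a` real and `B = b · exp (i arg α)`. Then `AB = α` and `|A|² - |B|² = r` reduce to
`ab = |α|` and `a² - b² = r`, i.e. `(a + bi)² = r + 2|α|i`, which has a solution since `ℂ` is
algebraically closed. The third condition is the conjugate of `AB = α`.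
-/

open Complex

theorem Real.exists_sq_sub_sq_eq_and_mul_eq (r c : ℝ) :
    ∃ a b : ℝ, a ^ 2 - b ^ 2 = r ∧ a * b = c := by
  obtain ⟨w, hw⟩ := IsAlgClosed.exists_pow_nat_eq (⟨r, 2 * c⟩ : ℂ) two_pos
  refine ⟨w.re, w.im, by simpa [sq] using congrArg Complex.re hw, ?_⟩
  have him := congrArg Complex.im hw
  simp only [sq, mul_im] at him
  linarith

theorem Complex.exists_mul_eq_and_normSq_sub_normSq_eq (α : ℂ) (r : ℝ) :
    ∃ A B : ℂ, A * B = α ∧ normSq A - normSq B = r := by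
  obtain ⟨a, b, hsq, hmul⟩ := Real.exists_sq_sub_sq_eq_and_mul_eq r ‖α‖
  refine ⟨a, b * exp (arg α * I), ?_, ?_⟩
  · rw [← mul_assoc, ← ofReal_mul, hmul, norm_mul_exp_arg_mul_I]
  · simp [normSq_eq_norm_sq, norm_exp_ofReal_mul_I, ← hsq, sq]

theorem scalar_quadratic_factorisation_general (α : ℂ) (r : ℝ) :
    ∃ A B : ℂ,
      A * B = α ∧
      Complex.normSq A - Complex.normSq B = r ∧
      starRingEnd ℂ A * starRingEnd ℂ B = starRingEnd ℂ α := by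
  obtain ⟨A, B, hmul, hnorm⟩ := exists_mul_eq_and_normSq_sub_normSq_eq α r
  exact ⟨A, B, hmul, hnorm, by rw [← map_mul, hmul]⟩

theorem scalar_quadratic_factorisation (α : ℂ) (r : ℝ)
    (hne : ¬(α = 0 ∧ r = 0)) :
    ∃ A B : ℂ,
      A * B = α ∧
      Complex.normSq A - Complex.normSq B = r ∧
      starRingEnd ℂ A * starRingEnd ℂ B = starRingEnd ℂ α :=
  scalar_quadratic_factorisation_general α r
end

section
/- With Φ as in the Gibbons–Hawking ansatz above (2k×2k, a₊, a₋ > 0), if all pairwise distances ‖x^i − x^j‖ (i ≠ j) exceed 2k/min(a₊, a₋), then Φ is strictly diagonally dominant with positive diagonal, hence positive definite and invertible. -/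
open Matrix

/-- Sign of an index in `{−k,…,−1,1,…,k}`: `inl` indices are positive, `inr` negative. -/
def ghSgn {k : ℕ} : Fin k ⊕ Fin k → ℝ := Sum.elim (fun _ => 1) (fun _ => -1)

/-- `s i j = − sgn i · sgn j`. -/
def ghS {k : ℕ} (i j : Fin k ⊕ Fin k) : ℝ := -(ghSgn i * ghSgn j)

/-- The Gibbons–Hawking potential matrix `Φ`. -/
noncomputable def ghPhi {k : ℕ} (aplus aminus : ℝ)
    (x : Fin k ⊕ Fin k → EuclideanSpace ℝ (Fin 3)) :
    Matrix (Fin k ⊕ Fin k) (Fin k ⊕ Fin k) ℝ :=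
  fun i j =>
    if i = j then
      Sum.elim (fun _ => aplus) (fun _ => aminus) i
        + ∑ m ∈ Finset.univ.erase i, ghS i m / ‖x i - x m‖
    else -(ghS i j) / ‖x i - x j‖

open Finset in
/-- A symmetric strictly diagonally dominant real matrix is positive definite. -/
lemma posDef_of_diag_dominant {n : Type*} [Fintype n] [DecidableEq n]
    (A : Matrix n n ℝ) (hsym : ∀ i j, A i j = A j i)
    (hdom : ∀ i, ∑ j ∈ Finset.univ.erase i, |A i j| < A i i) : A.PosDef := by
  rw [posDef_iff_dotProduct_mulVec]
  constructor
  · ext i j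
    simp [conjTranspose_apply, hsym i j]
  · intro v hv
    have hstar : star v = v := rfl
    rw [hstar]
    have hQ : dotProduct v (A *ᵥ v) = ∑ i, ∑ j, v i * (A i j * v j) := by
      simp [dotProduct, mulVec, Finset.mul_sum]
    rw [hQ]
    set r : n → ℝ := fun i => ∑ j ∈ univ.erase i, |A i j| with hr
    have step1 : ∀ i, A i i * v i ^ 2
        + ∑ j ∈ univ.erase i, (-(|A i j| * (v i ^ 2 + v j ^ 2) / 2))
        ≤ ∑ j, v i * (A i j * v j) := by
      intro i
      rw [← Finset.sum_erase_add _ _ (Finset.mem_univ i)]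
      have h1 : ∀ j ∈ univ.erase i,
          (-(|A i j| * (v i ^ 2 + v j ^ 2) / 2)) ≤ v i * (A i j * v j) := by
        intro j _
        nlinarith [sq_nonneg (v i + v j), sq_nonneg (v i - v j),
          neg_abs_le (A i j), le_abs_self (A i j), abs_nonneg (A i j)]
      have h2 := Finset.sum_le_sum h1
      have h3 : v i * (A i i * v i) = A i i * v i ^ 2 := by ring
      rw [h3, add_comm]
      exact add_le_add h2 le_rfl
    have swap : ∑ i, ∑ j ∈ univ.erase i, |A i j| * v j ^ 2 / 2
        = ∑ i, r i * v i ^ 2 / 2 := by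
      rw [Finset.sum_comm' (s := univ) (t := fun x => univ.erase x)
        (t' := univ) (s' := fun y => univ.erase y)
        (by intro x y; simp [Finset.mem_erase, ne_comm])]
      refine Finset.sum_congr rfl fun j _ => ?_
      rw [hr]
      rw [Finset.sum_mul, Finset.sum_div]
      refine Finset.sum_congr rfl fun i _ => ?_
      rw [hsym i j]
    have step2 : ∑ i, (A i i * v i ^ 2
        + ∑ j ∈ univ.erase i, (-(|A i j| * (v i ^ 2 + v j ^ 2) / 2)))
        = ∑ i, (A i i - r i) * v i ^ 2 := by
      have hpt : ∀ i, ∑ j ∈ univ.erase i, (-(|A i j| * (v i ^ 2 + v j ^ 2) / 2))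
          = -(r i * v i ^ 2 / 2) - ∑ j ∈ univ.erase i, |A i j| * v j ^ 2 / 2 := by
        intro i
        rw [hr, Finset.sum_mul, Finset.sum_div, ← Finset.sum_neg_distrib,
          ← Finset.sum_sub_distrib]
        refine Finset.sum_congr rfl fun j _ => ?_
        ring
      simp_rw [hpt]
      rw [Finset.sum_add_distrib, Finset.sum_sub_distrib, swap, Finset.sum_neg_distrib]
      have hrw : ∑ i, (A i i - r i) * v i ^ 2
          = ∑ i, A i i * v i ^ 2
            - (∑ i, r i * v i ^ 2 / 2 + ∑ i, r i * v i ^ 2 / 2) := by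
        rw [← Finset.sum_add_distrib, ← Finset.sum_sub_distrib]
        exact Finset.sum_congr rfl fun i _ => by ring
      rw [hrw]; ring
    have hge : ∑ i, (A i i - r i) * v i ^ 2 ≤ ∑ i, ∑ j, v i * (A i j * v j) := by
      rw [← step2]
      exact Finset.sum_le_sum fun i _ => step1 i
    refine lt_of_lt_of_le ?_ hge
    obtain ⟨i0, hi0⟩ := Function.ne_iff.mp hv
    refine Finset.sum_pos' (fun i _ => ?_) ⟨i0, Finset.mem_univ i0, ?_⟩
    · exact mul_nonneg (sub_nonneg.2 (hdom i).le) (sq_nonneg _)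
    · simp only [Pi.zero_apply] at hi0
      have : (0:ℝ) < v i0 ^ 2 := by positivity
      exact mul_pos (sub_pos.2 (hdom i0)) this

theorem ghPhi_posDef_of_large_separation {k : ℕ} (aplus aminus : ℝ)
    (haplus : 0 < aplus) (haminus : 0 < aminus)
    (x : Fin k ⊕ Fin k → EuclideanSpace ℝ (Fin 3))
    (hsep : ∀ i j, i ≠ j → (2 * k : ℝ) / min aplus aminus < ‖x i - x j‖) :
    (∀ i, 0 < ghPhi aplus aminus x i i) ∧
    (∀ i, ∑ j ∈ Finset.univ.erase i, |ghPhi aplus aminus x i j|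
        < ghPhi aplus aminus x i i) ∧
    (ghPhi aplus aminus x).PosDef ∧
    IsUnit (ghPhi aplus aminus x).det := by
  classical
  set m0 := min aplus aminus with hm0def
  have hm : 0 < m0 := lt_min haplus haminus
  have hdpos : ∀ i j : Fin k ⊕ Fin k, i ≠ j → (0:ℝ) < ‖x i - x j‖ := by
    intro i j hij
    refine lt_of_le_of_lt ?_ (hsep i j hij)
    positivity
  have hkpos : ∀ _i : Fin k ⊕ Fin k, 0 < k := by
    rintro (a | a) <;> exact a.pos
  have hinv : ∀ i j : Fin k ⊕ Fin k, i ≠ j → 1 / ‖x i - x j‖ < m0 / (2 * k) := by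
    intro i j hij
    have hk : (0:ℝ) < (k:ℝ) := by exact_mod_cast hkpos i
    have h2k : (0:ℝ) < 2 * (k:ℝ) / m0 := by positivity
    have := one_div_lt_one_div_of_lt h2k (hsep i j hij)
    rwa [one_div_div] at this
  have habsS : ∀ i j : Fin k ⊕ Fin k, |ghS i j| = 1 := by
    rintro (a | a) (b | b) <;> norm_num [ghS, ghSgn]
  have hdom : ∀ i, ∑ j ∈ Finset.univ.erase i, |ghPhi aplus aminus x i j|
      < ghPhi aplus aminus x i i := by
    intro i
    have hdiag : ghPhi aplus aminus x i i
        = Sum.elim (fun _ => aplus) (fun _ => aminus) i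
          + ∑ m ∈ Finset.univ.erase i, ghS i m / ‖x i - x m‖ := by
      simp [ghPhi]
    have habs : ∀ j ∈ Finset.univ.erase i,
        |ghPhi aplus aminus x i j| = 1 / ‖x i - x j‖ := by
      intro j hj
      have hji : i ≠ j := fun h => (Finset.mem_erase.mp hj).1 h.symm
      rw [ghPhi]
      simp only [if_neg hji]
      rw [abs_div, abs_neg, habsS, abs_of_pos (hdpos i j hji)]
    rw [hdiag, Finset.sum_congr rfl habs, ← sub_lt_iff_lt_add,
      ← Finset.sum_sub_distrib]
    have hpt : ∀ j ∈ Finset.univ.erase i,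
        1 / ‖x i - x j‖ - ghS i j / ‖x i - x j‖ = (1 - ghS i j) / ‖x i - x j‖ :=
      fun j _ => (sub_div _ _ _).symm
    rw [Finset.sum_congr rfl hpt]
    have hzero : (1 - ghS i i) / ‖x i - x i‖ = 0 := by simp
    rw [Finset.sum_erase_eq_sub (Finset.mem_univ i), hzero, sub_zero]
    have hk0 : 0 < k := hkpos i
    have hkR : (0:ℝ) < (k:ℝ) := by exact_mod_cast hk0
    have hne : Nonempty (Fin k) := ⟨⟨0, hk0⟩⟩
    have hconst : ∑ _a : Fin k, m0 / (k:ℝ) = m0 := by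
      rw [Finset.sum_const, Finset.card_univ, Fintype.card_fin, nsmul_eq_mul]
      field_simp
    rcases i with a0 | a0
    · rw [Fintype.sum_sum_type]
      have hR : ∀ b : Fin k,
          (1 - ghS (Sum.inl a0) (Sum.inr b)) / ‖x (Sum.inl a0) - x (Sum.inr b)‖ = 0 := by
        intro b; norm_num [ghS, ghSgn]
      rw [Finset.sum_congr rfl (fun b _ => hR b), Finset.sum_const_zero, add_zero]
      have hlt : ∀ a ∈ (Finset.univ : Finset (Fin k)),
          (1 - ghS (Sum.inl a0) (Sum.inl a)) / ‖x (Sum.inl a0) - x (Sum.inl a)‖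
            < m0 / (k:ℝ) := by
        intro a _
        by_cases ha : a = a0
        · subst ha
          have : (1 - ghS (Sum.inl a) (Sum.inl a)) / ‖x (Sum.inl a) - x (Sum.inl a)‖ = 0 := by
            simp
          rw [this]; positivity
        · have hne' : (Sum.inl a0 : Fin k ⊕ Fin k) ≠ Sum.inl a :=
            fun h => ha (Sum.inl.inj h).symm
          have hS : ghS (Sum.inl a0) (Sum.inl a) = -1 := by norm_num [ghS, ghSgn]
          rw [hS]
          have h1 := hinv _ _ hne'
          have h2 : (1 - (-1:ℝ)) / ‖x (Sum.inl a0) - x (Sum.inl a)‖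
              = 2 * (1 / ‖x (Sum.inl a0) - x (Sum.inl a)‖) := by ring
          rw [h2]
          have h3 : 2 * (1 / ‖x (Sum.inl a0) - x (Sum.inl a)‖) < 2 * (m0 / (2 * k)) :=
            (mul_lt_mul_iff_right₀ two_pos).mpr h1
          have h4 : 2 * (m0 / (2 * (k:ℝ))) = m0 / k := by field_simp
          rw [h4] at h3
          exact h3
      calc ∑ a : Fin k, (1 - ghS (Sum.inl a0) (Sum.inl a)) / ‖x (Sum.inl a0) - x (Sum.inl a)‖
          < ∑ _a : Fin k, m0 / (k:ℝ) :=
            Finset.sum_lt_sum_of_nonempty Finset.univ_nonempty hlt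
        _ = m0 := hconst
        _ ≤ Sum.elim (fun _ => aplus) (fun _ => aminus) (Sum.inl a0 : Fin k ⊕ Fin k) := by
            simp only [Sum.elim_inl]
            rw [hm0def]
            exact min_le_left aplus aminus
    · rw [Fintype.sum_sum_type]
      have hR : ∀ b : Fin k,
          (1 - ghS (Sum.inr a0) (Sum.inl b)) / ‖x (Sum.inr a0) - x (Sum.inl b)‖ = 0 := by
        intro b; norm_num [ghS, ghSgn]
      rw [Finset.sum_congr rfl (fun b _ => hR b), Finset.sum_const_zero, zero_add]
      have hlt : ∀ a ∈ (Finset.univ : Finset (Fin k)),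
          (1 - ghS (Sum.inr a0) (Sum.inr a)) / ‖x (Sum.inr a0) - x (Sum.inr a)‖
            < m0 / (k:ℝ) := by
        intro a _
        by_cases ha : a = a0
        · subst ha
          have : (1 - ghS (Sum.inr a) (Sum.inr a)) / ‖x (Sum.inr a) - x (Sum.inr a)‖ = 0 := by
            simp
          rw [this]; positivity
        · have hne' : (Sum.inr a0 : Fin k ⊕ Fin k) ≠ Sum.inr a :=
            fun h => ha (Sum.inr.inj h).symm
          have hS : ghS (Sum.inr a0) (Sum.inr a) = -1 := by norm_num [ghS, ghSgn]
          rw [hS]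
          have h1 := hinv _ _ hne'
          have h2 : (1 - (-1:ℝ)) / ‖x (Sum.inr a0) - x (Sum.inr a)‖
              = 2 * (1 / ‖x (Sum.inr a0) - x (Sum.inr a)‖) := by ring
          rw [h2]
          have h3 : 2 * (1 / ‖x (Sum.inr a0) - x (Sum.inr a)‖) < 2 * (m0 / (2 * k)) :=
            (mul_lt_mul_iff_right₀ two_pos).mpr h1
          have h4 : 2 * (m0 / (2 * (k:ℝ))) = m0 / k := by field_simp
          rw [h4] at h3
          exact h3
      calc ∑ a : Fin k, (1 - ghS (Sum.inr a0) (Sum.inr a)) / ‖x (Sum.inr a0) - x (Sum.inr a)‖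
          < ∑ _a : Fin k, m0 / (k:ℝ) :=
            Finset.sum_lt_sum_of_nonempty Finset.univ_nonempty hlt
        _ = m0 := hconst
        _ ≤ Sum.elim (fun _ => aplus) (fun _ => aminus) (Sum.inr a0 : Fin k ⊕ Fin k) := by
            simp only [Sum.elim_inr]
            rw [hm0def]
            exact min_le_right aplus aminus
  have hpos : ∀ i, 0 < ghPhi aplus aminus x i i := fun i =>
    lt_of_le_of_lt (Finset.sum_nonneg fun j _ => abs_nonneg _) (hdom i)
  have hsym : ∀ i j, ghPhi aplus aminus x i j = ghPhi aplus aminus x j i := by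
    intro i j
    by_cases h : i = j
    · subst h; rfl
    · simp only [ghPhi, if_neg h, if_neg (Ne.symm h)]
      rw [ghS, ghS, mul_comm, norm_sub_rev]
  have hPD := posDef_of_diag_dominant _ hsym hdom
  exact ⟨hpos, hdom, hPD, hPD.det_pos.ne'.isUnit⟩
end
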